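/- arXiv:0804.1634 — 3 statements merged into one kernel-verified Lean document; each statement's English description precedes it below -/
import Mathlib

section
/- Let N be a Poisson process with rate λ > 0 and (C_i) an i.i.d. sequence of real random variables independent of N, and let M be a Poisson process with rate rλ (r > 0) independent of N and (C_i). Then for any T > 0 the laws of the compound Poisson paths (Σ_{i=1}^{N_t} C_i)_{0≤t≤T} and (Σ_{i=1}^{M_t} C_i)_{0≤t≤T} on Skorokhod space are mutually absolutely continuous. -/
open MeasureTheory ProbabilityTheory Filter Topology Set
open scoped NNReal ENNReal

section Prelim
variable {Ω : Type*} [MeasurableSpace Ω]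

/-- Independent increments for a real-time process. -/
def HasIndepIncrements {E : Type*} [MeasurableSpace E] [Sub E]
    (μ : Measure Ω) (X : ℝ → Ω → E) : Prop :=
  ∀ (n : ℕ) (t : Fin (n + 1) → ℝ), Monotone t →
    iIndepFun
      (fun i : Fin n => fun ω => X (t i.succ) ω - X (t i.castSucc) ω) μ

/-- Stationary increments. -/
def HasStatIncrements {E : Type*} [MeasurableSpace E] [Sub E]
    (μ : Measure Ω) (X : ℝ → Ω → E) : Prop :=
  ∀ s t : ℝ, 0 ≤ s → 0 ≤ t →
    Measure.map (fun ω => X (s + t) ω - X s ω) μ = Measure.map (X t) μ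

/-- A càdlàg path on `[0,∞)`. -/
def CadlagOn {E : Type*} [TopologicalSpace E] (f : ℝ → E) : Prop :=
  (∀ t ≥ (0:ℝ), ContinuousWithinAt f (Set.Ici t) t) ∧
    ∀ t > (0:ℝ), ∃ l, Tendsto f (nhdsWithin t (Set.Iio t)) (nhds l)

/-- A Lévy process with values in `E`. -/
def IsLevyProcess {E : Type*} [MeasurableSpace E] [TopologicalSpace E] [SubtractionMonoid E]
    (μ : Measure Ω) (X : ℝ → Ω → E) : Prop :=
  IsProbabilityMeasure μ ∧ (∀ ω, X 0 ω = 0) ∧ (∀ t, Measurable (X t)) ∧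
    HasIndepIncrements μ X ∧ HasStatIncrements μ X ∧
    ∀ᵐ ω ∂μ, CadlagOn fun t => X t ω

/-- A subordinator: a real Lévy process with nondecreasing paths. -/
def IsSubordinator (μ : Measure Ω) (X : ℝ → Ω → ℝ) : Prop :=
  IsLevyProcess μ X ∧ ∀ᵐ ω ∂μ, MonotoneOn (fun t => X t ω) (Set.Ici (0:ℝ))

/-- Left-endpoint Riemann sum of `H` against `X` along the partition `t`. -/
def riemannSum {n : ℕ} (t : Fin (n + 1) → ℝ) (H X : ℝ → Ω → ℝ) (ω : Ω) : ℝ :=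
  ∑ i : Fin n, H (t i.castSucc) ω * (X (t i.succ) ω - X (t i.castSucc) ω)

/-- `Z = ∫_0^T H_{s-} dX_s` in the semimartingale sense: the left-endpoint Riemann sums
converge to `Z` in probability as the mesh of the partition of `[0,T]` tends to `0`. -/
def IsStochInt (μ : Measure Ω) (H X : ℝ → Ω → ℝ) (T : ℝ) (Z : Ω → ℝ) : Prop :=
  ∀ ε > (0:ℝ), ∀ δ > (0:ℝ), ∃ m > (0:ℝ), ∀ (n : ℕ) (t : Fin (n + 1) → ℝ),
    Monotone t → t 0 = 0 → t (Fin.last n) = T →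
    (∀ i : Fin n, t i.succ - t i.castSucc < m) →
    μ {ω | δ ≤ |riemannSum t H X ω - Z ω|} < ENNReal.ofReal ε

/-- `Q = [X,X]_T`: sums of squared increments converge to `Q` in probability. -/
def IsQuadVar (μ : Measure Ω) (X : ℝ → Ω → ℝ) (T : ℝ) (Q : Ω → ℝ) : Prop :=
  ∀ ε > (0:ℝ), ∀ δ > (0:ℝ), ∃ m > (0:ℝ), ∀ (n : ℕ) (t : Fin (n + 1) → ℝ),
    Monotone t → t 0 = 0 → t (Fin.last n) = T →
    (∀ i : Fin n, t i.succ - t i.castSucc < m) →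
    μ {ω | δ ≤ |(∑ i : Fin n, (X (t i.succ) ω - X (t i.castSucc) ω) ^ 2) - Q ω|} < ENNReal.ofReal ε

/-- The jump of a path at time `t`. -/
noncomputable def jump (f : ℝ → ℝ) (t : ℝ) : ℝ := f t - Function.leftLim f t

/-- `(γ, σ², Π)` is the characteristic (Lévy–Khintchine) triplet of the real Lévy
process `X`, expressed through its characteristic function. -/
def IsLevyTriplet (μ : Measure Ω) (X : ℝ → Ω → ℝ) (γ σ2 : ℝ) (ν : Measure ℝ) : Prop :=
  ∀ (u t : ℝ), 0 ≤ t →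
    ∫ ω, Complex.exp (Complex.I * u * X t ω) ∂μ =
      Complex.exp (t * (Complex.I * γ * u - σ2 * u ^ 2 / 2 +
        ∫ x, (Complex.exp (Complex.I * u * x) - 1 -
          Complex.I * u * x * Set.indicator {y : ℝ | |y| < 1} (fun _ => (1:ℂ)) x) ∂ν))

/-- A Poisson process with rate `r`. -/
def IsPoissonProcess (μ : Measure Ω) (r : ℝ≥0) (N : ℝ → Ω → ℕ) : Prop :=
  IsProbabilityMeasure μ ∧ (∀ ω, N 0 ω = 0) ∧ (∀ t, Measurable (N t)) ∧
    (∀ᵐ ω ∂μ, MonotoneOn (fun t => N t ω) (Set.Ici (0:ℝ))) ∧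
    (∀ (n : ℕ) (t : Fin (n + 1) → ℝ), Monotone t →
      iIndepFun
        (fun i : Fin n => fun ω => N (t i.succ) ω - N (t i.castSucc) ω) μ) ∧
    ∀ s t : ℝ, 0 ≤ s → s ≤ t →
      Measure.map (fun ω => N t ω - N s ω) μ = poissonMeasure (r * Real.toNNReal (t - s))

/-- A standard Brownian motion. -/
def IsBrownianMotion (μ : Measure Ω) (B : ℝ → Ω → ℝ) : Prop :=
  IsProbabilityMeasure μ ∧ (∀ ω, B 0 ω = 0) ∧ (∀ t, Measurable (B t)) ∧
    HasIndepIncrements μ B ∧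
    (∀ s t : ℝ, 0 ≤ s → s ≤ t →
      Measure.map (fun ω => B t ω - B s ω) μ = gaussianReal 0 (Real.toNNReal (t - s))) ∧
    ∀ᵐ ω ∂μ, Continuous fun t => B t ω

end Prelim

/-!
Fix a grid `0 = t₀ ≤ ⋯ ≤ tₘ = T`. By independent Poisson increments, the probability that a
Poisson process of rate `rλ` takes the values `k₀ = 0 ≤ ⋯ ≤ kₘ` on it is a product of Poisson
weights, and comparing it with rate `λ` factor by factor gives the likelihood ratio
`r ^ kₘ * exp (-(r - 1) λ T)`, which depends only on the value at `T`. Since finite-dimensional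
atoms determine a finite measure on `ℕ`-valued paths, the counting path of `M` on `[0, T]` has this
density with respect to that of `N`, and symmetrically with `r⁻¹`. A compound path is a fixed
measurable function of the counting path and the jump sequence; by independence their joint law is
a product, so absolute continuity passes from the counting paths to the compound paths.
-/

theorem Fin.sum_succ_sub_castSucc {G : Type*} [AddCommGroup G] {m : ℕ} (f : Fin (m + 1) → G) :
    ∑ i : Fin m, (f i.succ - f i.castSucc) = f (Fin.last m) - f 0 := by
  induction m with
  | zero => simp
  | succ m ih =>
    rw [Fin.sum_univ_castSucc]
    simp only [Fin.succ_castSucc]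
    rw [ih (fun i => f i.castSucc), Fin.castSucc_zero, Fin.succ_last]
    abel

theorem Monotone.sum_succ_tsub_castSucc {m : ℕ} {k : Fin (m + 1) → ℕ} (hk : Monotone k) :
    ∑ i : Fin m, (k i.succ - k i.castSucc) = k (Fin.last m) - k 0 := by
  zify [hk (Fin.castSucc_le_succ _), hk (Fin.zero_le (Fin.last m))]
  exact Fin.sum_succ_sub_castSucc (fun i => (k i : ℤ))

theorem Fin.eq_iff_increments_eq {m : ℕ} {x k : Fin (m + 1) → ℕ} (hx : Monotone x)
    (hx0 : x 0 = 0) :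
    x = k ↔ (k 0 = 0 ∧ Monotone k) ∧
      ∀ i : Fin m, x i.succ - x i.castSucc = k i.succ - k i.castSucc := by
  constructor
  · rintro rfl
    exact ⟨⟨hx0, hx⟩, fun _ => rfl⟩
  · rintro ⟨⟨hk0, hk⟩, hinc⟩
    funext j
    induction j using Fin.induction with
    | zero => rw [hx0, hk0]
    | succ i ih =>
      have := hinc i
      have := hx (Fin.castSucc_le_succ i)
      have := hk (Fin.castSucc_le_succ i)
      omega

theorem poissonMeasure_mul_singleton (r b : ℝ≥0) (d : ℕ) :
    poissonMeasure (r * b) {d} =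
      ENNReal.ofReal ((r : ℝ) ^ d * Real.exp (-(((r : ℝ) - 1) * b))) * poissonMeasure b {d} := by
  rw [poissonMeasure_singleton, poissonMeasure_singleton, ← ENNReal.ofReal_mul (by positivity)]
  congr 1
  have : Real.exp (-((r : ℝ) * b)) = Real.exp (-(((r : ℝ) - 1) * b)) * Real.exp (-(b : ℝ)) := by
    rw [← Real.exp_add]; ring_nf
  push_cast
  rw [this, mul_pow]
  ring

theorem measurable_sum_range {E : Type*} [AddCommMonoid E] [MeasurableSpace E]
    [MeasurableAdd₂ E] : Measurable fun q : ℕ × (ℕ → E) => ∑ i ∈ Finset.range q.1, q.2 i :=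
  measurable_from_prod_countable_right fun n =>
    Finset.measurable_sum (Finset.range n) fun i _ => measurable_pi_apply i

theorem MeasureTheory.Measure.ext_of_cylinder_singleton {ι α : Type*} [Countable α]
    [MeasurableSpace α] [MeasurableSingletonClass α] {ν₁ ν₂ : Measure (ι → α)} [IsFiniteMeasure ν₁]
    (s₀ : Finset ι) (h : ∀ s : Finset ι, s₀ ⊆ s → ∀ k : s → α,
      ν₁ (cylinder s {k}) = ν₂ (cylinder s {k})) :
    ν₁ = ν₂ := by
  classical
  have hcyl : ∀ A ∈ measurableCylinders (fun _ : ι => α), ν₁ A = ν₂ A := by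
    intro A hA
    obtain ⟨s, S, -, rfl⟩ := (mem_measurableCylinders A).1 hA
    rw [cylinder_eq_cylinder_union (α := fun _ => α) s S s₀, cylinder]
    set S' := Finset.restrict₂ (π := fun _ => α) (Finset.subset_union_left (s₂ := s₀)) ⁻¹' S
    have hfib : ∀ k ∈ S', MeasurableSet ((s ∪ s₀).restrict (π := fun _ => α) ⁻¹' {k}) :=
      fun k _ => measurableSet_singleton k |>.preimage (Finset.measurable_restrict _)
    rw [← tsum_measure_preimage_singleton S'.to_countable hfib,
      ← tsum_measure_preimage_singleton S'.to_countable hfib]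
    exact tsum_congr fun k => h _ Finset.subset_union_right k.1
  refine ext_of_generate_finite _ generateFrom_measurableCylinders.symm
    isPiSystem_measurableCylinders hcyl (hcyl _ ?_)
  rw [← cylinder_univ ∅]
  exact cylinder_mem_measurableCylinders _ _ MeasurableSet.univ

theorem absolutelyContinuous_map_of_indepFun {Ω E F G : Type*} [MeasurableSpace Ω]
    [MeasurableSpace E] [MeasurableSpace F] [MeasurableSpace G] {μ : Measure Ω} [IsFiniteMeasure μ]
    {X Y : Ω → E} {Z : Ω → F} (hX : Measurable X) (hY : Measurable Y) (hZ : Measurable Z)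
    (hXZ : IndepFun X Z μ) (hYZ : IndepFun Y Z μ) (hXY : μ.map X ≪ μ.map Y)
    {g : E × F → G} (hg : Measurable g) :
    μ.map (fun ω => g (X ω, Z ω)) ≪ μ.map (fun ω => g (Y ω, Z ω)) := by
  change μ.map (g ∘ fun ω => (X ω, Z ω)) ≪ μ.map (g ∘ fun ω => (Y ω, Z ω))
  rw [← Measure.map_map hg (hX.prodMk hZ), ← Measure.map_map hg (hY.prodMk hZ),
    hXZ.map_prod_eq_prod_map_map hX.aemeasurable hZ.aemeasurable,
    hYZ.map_prod_eq_prod_map_map hY.aemeasurable hZ.aemeasurable]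
  exact (hXY.prod Measure.AbsolutelyContinuous.rfl).map hg

namespace IsPoissonProcess

variable {Ω : Type*} [MeasurableSpace Ω] {μ : Measure Ω}

theorem measurable_path {a : ℝ≥0} {X : ℝ → Ω → ℕ} (hX : IsPoissonProcess μ a X) (S : Set ℝ) :
    Measurable fun ω (t : S) => X t ω :=
  measurable_pi_lambda _ fun t => hX.2.2.1 t

theorem measure_forall_eq {a : ℝ≥0} {X : ℝ → Ω → ℕ} (hX : IsPoissonProcess μ a X) {m : ℕ}
    {t : Fin (m + 1) → ℝ} (ht : Monotone t) (ht0 : t 0 = 0) (k : Fin (m + 1) → ℕ) :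
    μ {ω | ∀ j, X (t j) ω = k j} =
      if k 0 = 0 ∧ Monotone k then
        ∏ i : Fin m, poissonMeasure (a * (t i.succ - t i.castSucc).toNNReal)
          {k i.succ - k i.castSucc}
      else 0 := by
  obtain ⟨-, hzero, hmeas, hmono, hinc, hlaw⟩ := hX
  have htnn : ∀ j, 0 ≤ t j := fun j => ht0 ▸ ht (Fin.zero_le j)
  have hae : {ω | ∀ j, X (t j) ω = k j} =ᵐ[μ] {ω | (k 0 = 0 ∧ Monotone k) ∧
      ∀ i : Fin m, X (t i.succ) ω - X (t i.castSucc) ω = k i.succ - k i.castSucc} := by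
    rw [Filter.eventuallyEq_set]
    filter_upwards [hmono] with ω hω
    simpa only [funext_iff] using Fin.eq_iff_increments_eq (x := fun j => X (t j) ω) (k := k)
      (fun i j hij => hω (htnn i) (htnn j) (ht hij)) (by simp only [ht0, hzero])
  rw [measure_congr hae]
  split_ifs with hk
  · simp only [hk, true_and, Set.ofPred_forall]
    refine ((hinc m t ht).meas_iInter fun i =>
      ⟨{k i.succ - k i.castSucc}, measurableSet_singleton _, rfl⟩).trans
      (Finset.prod_congr rfl fun i _ => ?_)
    rw [← hlaw _ _ (htnn _) (ht (Fin.castSucc_le_succ i)),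
      Measure.map_apply (f := fun ω => X (t i.succ) ω - X (t i.castSucc) ω)
        ((hmeas _).sub (hmeas _)) (measurableSet_singleton _)]
  · simp [hk]

variable {lam r : ℝ≥0} {N M : ℝ → Ω → ℕ}

theorem measure_forall_eq_of_rate_mul (hN : IsPoissonProcess μ lam N)
    (hM : IsPoissonProcess μ (r * lam) M) {m : ℕ} {t : Fin (m + 1) → ℝ} (ht : Monotone t)
    (ht0 : t 0 = 0) (k : Fin (m + 1) → ℕ) :
    μ {ω | ∀ j, M (t j) ω = k j} =
      ENNReal.ofReal
          ((r : ℝ) ^ k (Fin.last m) * Real.exp (-(((r : ℝ) - 1) * lam * t (Fin.last m)))) *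
        μ {ω | ∀ j, N (t j) ω = k j} := by
  rw [hM.measure_forall_eq ht ht0, hN.measure_forall_eq ht ht0]
  split_ifs with hk
  · obtain ⟨hk0, hk⟩ := hk
    have hΔt : ∀ i : Fin m, (((lam * (t i.succ - t i.castSucc).toNNReal : ℝ≥0)) : ℝ) =
        lam * (t i.succ - t i.castSucc) := fun i => by
      rw [NNReal.coe_mul, Real.coe_toNNReal _ (sub_nonneg.2 (ht (Fin.castSucc_le_succ i)))]
    simp_rw [mul_assoc r lam, poissonMeasure_mul_singleton]
    rw [Finset.prod_mul_distrib, ← ENNReal.ofReal_prod_of_nonneg fun i _ => by positivity,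
      Finset.prod_mul_distrib, Finset.prod_pow_eq_pow_sum, hk.sum_succ_tsub_castSucc, hk0,
      Nat.sub_zero, ← Real.exp_sum]
    simp_rw [hΔt, ← mul_assoc, ← neg_mul, ← Finset.mul_sum, Fin.sum_succ_sub_castSucc, ht0,
      sub_zero]
  · simp

theorem measure_forall_finset_eq_of_rate_mul (hN : IsPoissonProcess μ lam N)
    (hM : IsPoissonProcess μ (r * lam) M) {T : ℝ} [Fact (0 ≤ T)] (s : Finset (Icc (0 : ℝ) T))
    (hbot : ⊥ ∈ s) (htop : ⊤ ∈ s) (k : s → ℕ) :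
    μ {ω | ∀ i : s, M i ω = k i} =
      ENNReal.ofReal ((r : ℝ) ^ k ⟨⊤, htop⟩ * Real.exp (-(((r : ℝ) - 1) * lam * T)))
        * μ {ω | ∀ i : s, N i ω = k i} := by
  obtain ⟨m, hm⟩ : ∃ m, s.card = m + 1 :=
    ⟨s.card - 1, by have := Finset.card_pos.2 ⟨⊤, htop⟩; omega⟩
  set e := s.orderEmbOfFin hm
  have hrange : ∀ i ∈ s, ∃ j, e j = i := fun i hi => by
    rwa [← Finset.mem_coe, ← Finset.range_orderEmbOfFin s hm] at hi
  have he0 : e 0 = ⊥ := by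
    obtain ⟨j, hj⟩ := hrange ⊥ hbot
    exact le_bot_iff.1 (hj ▸ e.monotone (Fin.zero_le j))
  have helast : e (Fin.last m) = ⊤ := by
    obtain ⟨j, hj⟩ := hrange ⊤ htop
    exact top_le_iff.1 (hj ▸ e.monotone (Fin.le_last j))
  have hevent : ∀ X : ℝ → Ω → ℕ, {ω | ∀ i : s, X i ω = k i} =
      {ω | ∀ j, X (e j) ω = k ⟨e j, s.orderEmbOfFin_mem hm j⟩} := fun X => by
    ext ω
    refine ⟨fun h j => h _, fun h i => ?_⟩
    obtain ⟨j, hj⟩ := hrange i i.2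
    simpa only [hj] using h j
  have hmono : Monotone fun j => ((e j : Icc (0 : ℝ) T) : ℝ) := fun _ _ hij => e.monotone hij
  rw [hevent M, hevent N, hN.measure_forall_eq_of_rate_mul hM hmono (by simp [he0])]
  simp only [helast, Icc.coe_top]

theorem map_restrict_eq_withDensity (hN : IsPoissonProcess μ lam N)
    (hM : IsPoissonProcess μ (r * lam) M) (T : ℝ) [Fact (0 ≤ T)] :
    μ.map (fun ω (t : Icc (0 : ℝ) T) => M t ω) =
      (μ.map fun ω (t : Icc (0 : ℝ) T) => N t ω).withDensity fun f =>
        ENNReal.ofReal ((r : ℝ) ^ f ⊤ * Real.exp (-(((r : ℝ) - 1) * lam * T))) := by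
  have : IsProbabilityMeasure μ := hM.1
  refine Measure.ext_of_cylinder_singleton {⊥, ⊤} fun s hs k => ?_
  have hatom : MeasurableSet (cylinder (α := fun _ => ℕ) s {k}) :=
    (measurableSet_singleton k).cylinder
  have htop : ⊤ ∈ s := hs (by simp)
  have hevent : ∀ X : ℝ → Ω → ℕ,
      (fun ω (t : Icc (0 : ℝ) T) => X t ω) ⁻¹' cylinder (α := fun _ => ℕ) s {k} =
        {ω | ∀ i : s, X i ω = k i} := fun X => by
    ext ω
    simp [funext_iff]
  rw [withDensity_apply _ hatom, setLIntegral_congr_fun hatom fun f hf => by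
      rw [show f ⊤ = k ⟨⊤, htop⟩ from congrFun hf ⟨⊤, htop⟩],
    setLIntegral_const, Measure.map_apply (hM.measurable_path _) hatom,
    Measure.map_apply (hN.measurable_path _) hatom, hevent, hevent,
    hN.measure_forall_finset_eq_of_rate_mul hM s (hs (by simp)) htop, mul_comm]

theorem map_restrict_absolutelyContinuous (hN : IsPoissonProcess μ lam N)
    (hM : IsPoissonProcess μ (r * lam) M) (T : ℝ) [Fact (0 ≤ T)] :
    μ.map (fun ω (t : Icc (0 : ℝ) T) => M t ω) ≪ μ.map fun ω (t : Icc (0 : ℝ) T) => N t ω := by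
  rw [hN.map_restrict_eq_withDensity hM]
  exact withDensity_absolutelyContinuous _ _

end IsPoissonProcess

theorem compound_poisson_mutually_ac_general {Ω : Type*} [MeasurableSpace Ω]
    (μ : Measure Ω) [IsProbabilityMeasure μ] (lam r : ℝ≥0)
    (hr : 0 < r) (N M : ℝ → Ω → ℕ)
    (hN : IsPoissonProcess μ lam N) (hM : IsPoissonProcess μ (r * lam) M)
    (C : ℕ → Ω → ℝ) (hmeas : ∀ i, Measurable (C i))
    (hindepNC : IndepFun (fun ω => fun t : ℝ => N t ω)
      (fun ω => fun i : ℕ => C i ω) μ)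
    (hindepM : IndepFun (fun ω => fun t : ℝ => M t ω)
      (fun ω => (fun t : ℝ => N t ω, fun i : ℕ => C i ω)) μ)
    (T : ℝ) (hT : 0 < T) :
    Measure.map (fun ω => fun t : Set.Icc (0:ℝ) T =>
        ∑ i ∈ Finset.range (N (t:ℝ) ω), C i ω) μ ≪
      Measure.map (fun ω => fun t : Set.Icc (0:ℝ) T =>
        ∑ i ∈ Finset.range (M (t:ℝ) ω), C i ω) μ ∧
    Measure.map (fun ω => fun t : Set.Icc (0:ℝ) T =>
        ∑ i ∈ Finset.range (M (t:ℝ) ω), C i ω) μ ≪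
      Measure.map (fun ω => fun t : Set.Icc (0:ℝ) T =>
        ∑ i ∈ Finset.range (N (t:ℝ) ω), C i ω) μ := by
  have : Fact (0 ≤ T) := ⟨hT.le⟩
  have hrestrict : Measurable fun (f : ℝ → ℕ) (t : Icc (0 : ℝ) T) => f t :=
    measurable_pi_lambda _ fun t => measurable_pi_apply _
  have hcompound : Measurable fun (p : (Icc (0 : ℝ) T → ℕ) × (ℕ → ℝ)) (t : Icc (0 : ℝ) T) =>
      ∑ i ∈ Finset.range (p.1 t), p.2 i :=
    measurable_pi_lambda _ fun t =>
      measurable_sum_range.comp (measurable_fst.eval.prodMk measurable_snd :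
        Measurable fun p : (Icc (0 : ℝ) T → ℕ) × (ℕ → ℝ) => (p.1 t, p.2))
  have hN' : IsPoissonProcess μ (r⁻¹ * (r * lam)) N := by
    rwa [← mul_assoc, inv_mul_cancel₀ hr.ne', one_mul]
  have hjumps : Measurable fun ω i => C i ω := measurable_pi_lambda _ hmeas
  have hNC := hindepNC.comp hrestrict measurable_id
  have hMC := hindepM.comp hrestrict measurable_snd
  exact ⟨absolutelyContinuous_map_of_indepFun (hN.measurable_path _) (hM.measurable_path _)
      hjumps hNC hMC (hM.map_restrict_absolutelyContinuous hN' T) hcompound,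
    absolutelyContinuous_map_of_indepFun (hM.measurable_path _) (hN.measurable_path _)
      hjumps hMC hNC (hN.map_restrict_absolutelyContinuous hM T) hcompound⟩

/-- The path laws on `[0,T]` of two compound Poisson processes built from the same
i.i.d. jumps but different rates are mutually absolutely continuous. -/
theorem compound_poisson_mutually_ac {Ω : Type*} [MeasurableSpace Ω]
    (μ : Measure Ω) [IsProbabilityMeasure μ] (lam r : ℝ≥0)
    (hlam : 0 < lam) (hr : 0 < r) (N M : ℝ → Ω → ℕ)
    (hN : IsPoissonProcess μ lam N) (hM : IsPoissonProcess μ (r * lam) M)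
    (C : ℕ → Ω → ℝ) (hmeas : ∀ i, Measurable (C i))
    (hiid : iIndepFun C μ)
    (hident : ∀ i, Measure.map (C i) μ = Measure.map (C 0) μ)
    (hindepNC : IndepFun (fun ω => fun t : ℝ => N t ω)
      (fun ω => fun i : ℕ => C i ω) μ)
    (hindepM : IndepFun (fun ω => fun t : ℝ => M t ω)
      (fun ω => (fun t : ℝ => N t ω, fun i : ℕ => C i ω)) μ)
    (T : ℝ) (hT : 0 < T) :
    Measure.map (fun ω => fun t : Set.Icc (0:ℝ) T =>
        ∑ i ∈ Finset.range (N (t:ℝ) ω), C i ω) μ ≪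
      Measure.map (fun ω => fun t : Set.Icc (0:ℝ) T =>
        ∑ i ∈ Finset.range (M (t:ℝ) ω), C i ω) μ ∧
    Measure.map (fun ω => fun t : Set.Icc (0:ℝ) T =>
        ∑ i ∈ Finset.range (M (t:ℝ) ω), C i ω) μ ≪
      Measure.map (fun ω => fun t : Set.Icc (0:ℝ) T =>
        ∑ i ∈ Finset.range (N (t:ℝ) ω), C i ω) μ :=
  compound_poisson_mutually_ac_general μ lam r hr N M hN hM C hmeas hindepNC hindepM T hT
end

section
/- Let (ξ,η) be a bivariate Lévy process, W the Lévy process with e^{-ξ_t} = ε(W)_t, and V the GOU process with V_0 = z. Then for every u ∈ ℝ and t ≥ 0, V_t = u + e^{ξ_t}(z - u + ∫_0^t e^{-ξ_{s-}} d(η_s - uW_s)). In particular, if η - uW is a subordinator and z ≥ u, then V_t ≥ u for all t ≥ 0. -/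
open MeasureTheory ProbabilityTheory Filter Topology Set
open scoped NNReal ENNReal

/-! Convergence in probability of Riemann sums along the uniform partitions of `[0, t]` is
preserved by linear combinations and has a.s. unique limits, so
`∫ e^{-ξ_{s-}} d(η - uW)_s = Z_t - u (e^{-ξ_t} - 1)` a.s., and multiplying by `e^{ξ_t}` gives the
decomposition. When `η - uW` is nondecreasing its Riemann sums against the positive integrand
`e^{-ξ}` are nonnegative, hence so is their limit, and then `V_t - u = e^{ξ_t} (z - u + Y_t) ≥ 0`. -/

namespace MeasureTheory.TendstoInMeasure

variable {α ι : Type*} [MeasurableSpace α] {μ : Measure α} {l : Filter ι}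

theorem sub {E : Type*} [SeminormedAddCommGroup E] {f g : ι → α → E} {F G : α → E}
    (hf : TendstoInMeasure μ f l F) (hg : TendstoInMeasure μ g l G) :
    TendstoInMeasure μ (fun i x => f i x - g i x) l (fun x => F x - G x) := by
  rw [tendstoInMeasure_iff_norm] at hf hg ⊢
  intro ε hε
  have hsplit : ∀ i, {x | ε ≤ ‖f i x - g i x - (F x - G x)‖}
      ⊆ {x | ε / 2 ≤ ‖f i x - F x‖} ∪ {x | ε / 2 ≤ ‖g i x - G x‖} := by
    intro i x hx
    by_contra hlt
    simp only [mem_union, mem_ofPred_eq, not_or, not_le] at hx hlt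
    have htri : ‖f i x - g i x - (F x - G x)‖ ≤ ‖f i x - F x‖ + ‖g i x - G x‖ := by
      rw [show f i x - g i x - (F x - G x) = (f i x - F x) - (g i x - G x) by abel]
      exact norm_sub_le _ _
    linarith
  have hsum := (hf (ε / 2) (half_pos hε)).add (hg (ε / 2) (half_pos hε))
  rw [add_zero] at hsum
  exact tendsto_of_tendsto_of_tendsto_of_le_of_le tendsto_const_nhds hsum (fun _ => zero_le)
    fun i => (measure_mono (hsplit i)).trans (measure_union_le _ _)

theorem const_mul {R : Type*} [SeminormedRing R] {f : ι → α → R} {F : α → R}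
    (hf : TendstoInMeasure μ f l F) (c : R) :
    TendstoInMeasure μ (fun i x => c * f i x) l (fun x => c * F x) := by
  rw [tendstoInMeasure_iff_norm] at hf ⊢
  intro ε hε
  have hc : 0 < ‖c‖ + 1 := by positivity
  have hsub : ∀ i, {x | ε ≤ ‖c * f i x - c * F x‖} ⊆ {x | ε / (‖c‖ + 1) ≤ ‖f i x - F x‖} := by
    intro i x hx
    simp only [mem_ofPred_eq, ← mul_sub] at hx ⊢
    rw [div_le_iff₀ hc]
    nlinarith [norm_mul_le c (f i x - F x), norm_nonneg (f i x - F x)]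
  exact tendsto_of_tendsto_of_tendsto_of_le_of_le tendsto_const_nhds (hf _ (div_pos hε hc))
    (fun _ => zero_le) fun i => measure_mono (hsub i)

theorem ae_mem_of_isClosed {E : Type*} [PseudoEMetricSpace E] [l.NeBot] [l.IsCountablyGenerated]
    {f : ι → α → E} {F : α → E} {s : Set E} (hF : TendstoInMeasure μ f l F) (hs : IsClosed s)
    (hf : ∀ i, ∀ᵐ x ∂μ, f i x ∈ s) : ∀ᵐ x ∂μ, F x ∈ s := by
  obtain ⟨ns, -, hns⟩ := hF.exists_seq_tendsto_ae'
  filter_upwards [hns, ae_all_iff.2 fun n => hf (ns n)] with x hx hmem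
  exact hs.mem_of_tendsto hx (Eventually.of_forall hmem)

end MeasureTheory.TendstoInMeasure

section StochInt

variable {Ω : Type*}

noncomputable def uniformPartition (T : ℝ) (n : ℕ) : Fin (n + 1) → ℝ := fun i => T * i / n

lemma uniformPartition_monotone {T : ℝ} (hT : 0 ≤ T) (n : ℕ) : Monotone (uniformPartition T n) :=
  fun i j hij => by
    unfold uniformPartition
    gcongr
    exact_mod_cast hij

lemma uniformPartition_zero (T : ℝ) (n : ℕ) : uniformPartition T n 0 = 0 := by
  simp [uniformPartition]

lemma uniformPartition_last (T : ℝ) {n : ℕ} (hn : n ≠ 0) :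
    uniformPartition T n (Fin.last n) = T := by
  simp [uniformPartition, hn]

lemma uniformPartition_succ_sub_castSucc (T : ℝ) {n : ℕ} (i : Fin n) :
    uniformPartition T n i.succ - uniformPartition T n i.castSucc = T / n := by
  simp only [uniformPartition, Fin.val_succ, Fin.val_castSucc, Nat.cast_add, Nat.cast_one]
  ring

lemma riemannSum_sub_mul {n : ℕ} (t : Fin (n + 1) → ℝ) (H X₁ X₂ : ℝ → Ω → ℝ) (c : ℝ) (ω : Ω) :
    riemannSum t H (fun r ω => X₁ r ω - c * X₂ r ω) ω
      = riemannSum t H X₁ ω - c * riemannSum t H X₂ ω := by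
  simp only [riemannSum, Finset.mul_sum, ← Finset.sum_sub_distrib]
  exact Finset.sum_congr rfl fun i _ => by ring

lemma riemannSum_nonneg {n : ℕ} {t : Fin (n + 1) → ℝ} {H X : ℝ → Ω → ℝ} {ω : Ω}
    (ht : Monotone t) (ht0 : 0 ≤ t 0) (hH : ∀ s, 0 ≤ H s ω)
    (hX : MonotoneOn (fun r => X r ω) (Ici 0)) : 0 ≤ riemannSum t H X ω := by
  refine Finset.sum_nonneg fun i _ => mul_nonneg (hH _) (sub_nonneg.2 ?_)
  exact hX (ht0.trans (ht (Fin.zero_le _))) (ht0.trans (ht (Fin.zero_le _)))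
    (ht i.castSucc_le_succ)

variable [MeasurableSpace Ω] {μ : Measure Ω} {H X : ℝ → Ω → ℝ} {T : ℝ}

theorem IsStochInt.tendstoInMeasure {Z : Ω → ℝ} (hT : 0 ≤ T) (h : IsStochInt μ H X T Z) :
    TendstoInMeasure μ (fun n => riemannSum (uniformPartition T n) H X) atTop Z := by
  rw [tendstoInMeasure_iff_dist]
  intro δ hδ
  refine ENNReal.tendsto_nhds_zero.2 fun ε hε => ?_
  obtain ⟨r, -, hr, hrε⟩ := ENNReal.lt_iff_exists_real_btwn.1 hε
  obtain ⟨m, hm, hmesh⟩ := h r (ENNReal.ofReal_pos.1 hr) δ hδ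
  filter_upwards [(tendsto_const_div_atTop_nhds_zero_nat T).eventually (gt_mem_nhds hm),
    eventually_ne_atTop 0] with n hn hn0
  have hlt := hmesh n _ (uniformPartition_monotone hT n) (uniformPartition_zero T n)
    (uniformPartition_last T hn0) fun i => (uniformPartition_succ_sub_castSucc T i).trans_lt hn
  simp only [Real.dist_eq]
  exact hlt.le.trans hrε.le

theorem IsStochInt.ae_eq_sub_mul {X₁ X₂ : ℝ → Ω → ℝ} {Z Z₁ Z₂ : Ω → ℝ} {c : ℝ} (hT : 0 ≤ T)
    (h : IsStochInt μ H (fun r ω => X₁ r ω - c * X₂ r ω) T Z)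
    (h₁ : IsStochInt μ H X₁ T Z₁) (h₂ : IsStochInt μ H X₂ T Z₂) :
    Z =ᵐ[μ] fun ω => Z₁ ω - c * Z₂ ω := by
  refine tendstoInMeasure_ae_unique (h.tendstoInMeasure hT) ?_
  convert (h₁.tendstoInMeasure hT).sub ((h₂.tendstoInMeasure hT).const_mul c) using 2 with n
  exact funext (riemannSum_sub_mul _ H X₁ X₂ c)

theorem IsStochInt.ae_nonneg {Z : Ω → ℝ} (hT : 0 ≤ T) (h : IsStochInt μ H X T Z)
    (hH : ∀ s ω, 0 ≤ H s ω) (hX : ∀ᵐ ω ∂μ, MonotoneOn (fun r => X r ω) (Ici 0)) :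
    ∀ᵐ ω ∂μ, 0 ≤ Z ω :=
  (h.tendstoInMeasure hT).ae_mem_of_isClosed isClosed_Ici fun n => by
    filter_upwards [hX] with ω hω
    exact riemannSum_nonneg (uniformPartition_monotone hT n) (uniformPartition_zero T n).ge
      (hH · ω) hω

end StochInt

theorem gou_decomposition_general {Ω : Type*} [MeasurableSpace Ω] (μ : Measure Ω)
    (ξ η W : ℝ → Ω → ℝ)
    (hSDE : ∀ t ≥ (0:ℝ), IsStochInt μ (fun s ω => Real.exp (-ξ s ω)) W t
      (fun ω => Real.exp (-ξ t ω) - 1))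
    (z u : ℝ) (Z Y : ℝ → Ω → ℝ)
    (hZ : ∀ t ≥ (0:ℝ), IsStochInt μ (fun s ω => Real.exp (-ξ s ω)) η t (Z t))
    (hY : ∀ t ≥ (0:ℝ), IsStochInt μ (fun s ω => Real.exp (-ξ s ω))
      (fun r ω => η r ω - u * W r ω) t (Y t))
    (V : ℝ → Ω → ℝ) (hV : ∀ t ω, V t ω = Real.exp (ξ t ω) * (z + Z t ω)) :
    (∀ t ≥ (0:ℝ), ∀ᵐ ω ∂μ, V t ω = u + Real.exp (ξ t ω) * (z - u + Y t ω)) ∧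
      (IsSubordinator μ (fun r ω => η r ω - u * W r ω) → u ≤ z →
        ∀ t ≥ (0:ℝ), ∀ᵐ ω ∂μ, u ≤ V t ω) := by
  have hdecomp : ∀ t ≥ (0:ℝ), ∀ᵐ ω ∂μ, V t ω = u + Real.exp (ξ t ω) * (z - u + Y t ω) := by
    intro t ht
    filter_upwards [(hY t ht).ae_eq_sub_mul ht (hZ t ht) (hSDE t ht)] with ω hω
    rw [hV, hω, Real.exp_neg]
    field_simp
    ring
  refine ⟨hdecomp, fun hSub hzu t ht => ?_⟩
  filter_upwards [(hY t ht).ae_nonneg ht (fun s ω => (Real.exp_pos _).le) hSub.2, hdecomp t ht]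
    with ω hY0 hω
  rw [hω]
  nlinarith [Real.exp_pos (ξ t ω)]

/-- The decomposition `V_t = u + e^{ξ_t}(z - u + ∫_0^t e^{-ξ_{s-}} d(η-uW)_s)`; if
`η - uW` is a subordinator and `z ≥ u` then `V_t ≥ u`. -/
theorem gou_decomposition {Ω : Type*} [MeasurableSpace Ω] (μ : Measure Ω)
    (ξ η W : ℝ → Ω → ℝ) (hLevy : IsLevyProcess μ fun t ω => (ξ t ω, η t ω))
    (hWLevy : IsLevyProcess μ W)
    (hSDE : ∀ t ≥ (0:ℝ), IsStochInt μ (fun s ω => Real.exp (-ξ s ω)) W t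
      (fun ω => Real.exp (-ξ t ω) - 1))
    (z u : ℝ) (Z Y : ℝ → Ω → ℝ)
    (hZ : ∀ t ≥ (0:ℝ), IsStochInt μ (fun s ω => Real.exp (-ξ s ω)) η t (Z t))
    (hY : ∀ t ≥ (0:ℝ), IsStochInt μ (fun s ω => Real.exp (-ξ s ω))
      (fun r ω => η r ω - u * W r ω) t (Y t))
    (V : ℝ → Ω → ℝ) (hV : ∀ t ω, V t ω = Real.exp (ξ t ω) * (z + Z t ω)) :
    (∀ t ≥ (0:ℝ), ∀ᵐ ω ∂μ, V t ω = u + Real.exp (ξ t ω) * (z - u + Y t ω)) ∧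
      (IsSubordinator μ (fun r ω => η r ω - u * W r ω) → u ≤ z →
        ∀ t ≥ (0:ℝ), ∀ᵐ ω ∂μ, u ≤ V t ω) :=
  gou_decomposition_general μ ξ η W hSDE z u Z Y hZ hY V hV
end

section
/- Let u ∈ ℝ and (ξ,η) a bivariate Lévy process with Lévy measure Π_{ξ,η}, and assume Π_{ξ,η}({(x,y) : y − u(e^{-x}−1) ≤ 0, (x,y) ≠ 0}) = 0. Then ∫_{{y - u(e^{-x}-1) > 0} ∩ {x^2 + y^2 < 1}} (ux + y)^- Π_{ξ,η}(d(x,y)) ≤ |u| ∫_ℝ min{1, x^2} Π_ξ(dx) < ∞. -/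
open MeasureTheory Set

lemma aux_exp_bound (x : ℝ) (hx : |x| ≤ 1) : Real.exp (-x) - 1 + x ≤ x ^ 2 := by
  have h := Real.exp_bound (x := -x) (by simpa using hx) (n := 3)
  simp [Finset.sum_range_succ, Nat.factorial] at h
  have h1 : |x| ^ 3 = |x| * x ^ 2 := by rw [pow_succ, sq_abs, mul_comm]
  have h3 : 0 ≤ |x| := abs_nonneg x
  have h4 : |x| * x ^ 2 ≤ x ^ 2 := by nlinarith [sq_nonneg x]
  have h2 := (abs_le.mp h).2
  nlinarith

/-- The negative part `(ux+y)⁻` integrated over the small-jump region where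
`y - u(e^{-x}-1) > 0` is bounded by `|u| ∫ min{1,x²} Π_ξ(dx) < ∞`. -/
theorem negative_part_levy_bound (u : ℝ) (Pi2 : Measure (ℝ × ℝ))
    (hlevy : ∫⁻ p, ENNReal.ofReal (min (p.1 ^ 2 + p.2 ^ 2) 1) ∂Pi2 ≠ ⊤)
    (hnojump : Pi2 {p : ℝ × ℝ | p ≠ 0 ∧ p.2 - u * (Real.exp (-p.1) - 1) ≤ 0} = 0) :
    (∫⁻ p in {p : ℝ × ℝ | 0 < p.2 - u * (Real.exp (-p.1) - 1) ∧ p.1 ^ 2 + p.2 ^ 2 < 1},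
        ENNReal.ofReal (-(u * p.1 + p.2)) ∂Pi2) ≤
      ENNReal.ofReal |u| *
        ∫⁻ x, ENNReal.ofReal (min 1 (x ^ 2)) ∂(Measure.map Prod.fst Pi2) ∧
    ENNReal.ofReal |u| *
        ∫⁻ x, ENNReal.ofReal (min 1 (x ^ 2)) ∂(Measure.map Prod.fst Pi2) < ⊤ := by
  have hfm : Measurable fun x : ℝ => ENNReal.ofReal (min 1 (x ^ 2)) :=
    ENNReal.measurable_ofReal.comp (measurable_const.min (measurable_id.pow_const 2))
  have hm2 : Measurable fun p : ℝ × ℝ =>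
      ENNReal.ofReal |u| * ENNReal.ofReal (min 1 (p.1 ^ 2)) :=
    measurable_const.mul (hfm.comp measurable_fst)
  have hmap : (∫⁻ x, ENNReal.ofReal (min 1 (x ^ 2)) ∂(Measure.map Prod.fst Pi2))
      = ∫⁻ p : ℝ × ℝ, ENNReal.ofReal (min 1 (p.1 ^ 2)) ∂Pi2 :=
    lintegral_map hfm measurable_fst
  have hfin : (∫⁻ p : ℝ × ℝ, ENNReal.ofReal (min 1 (p.1 ^ 2)) ∂Pi2) ≠ ⊤ := by
    refine ne_top_of_le_ne_top hlevy (lintegral_mono fun p => ?_)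
    exact ENNReal.ofReal_le_ofReal (le_min (by
      nlinarith [min_le_right 1 (p.1^2), min_le_left 1 (p.1^2), sq_nonneg p.2])
      (min_le_left 1 (p.1^2)))
  constructor
  · calc (∫⁻ p in {p : ℝ × ℝ | 0 < p.2 - u * (Real.exp (-p.1) - 1) ∧ p.1 ^ 2 + p.2 ^ 2 < 1},
        ENNReal.ofReal (-(u * p.1 + p.2)) ∂Pi2)
        ≤ ∫⁻ p in {p : ℝ × ℝ | 0 < p.2 - u * (Real.exp (-p.1) - 1) ∧ p.1 ^ 2 + p.2 ^ 2 < 1},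
            ENNReal.ofReal |u| * ENNReal.ofReal (min 1 (p.1 ^ 2)) ∂Pi2 := by
          refine setLIntegral_mono hm2 fun p hp => ?_
          obtain ⟨hy, hsm⟩ := hp
          set x := p.1; set y := p.2
          have hx2 : x ^ 2 < 1 := by nlinarith [sq_nonneg y]
          have hxabs : |x| ≤ 1 := by nlinarith [abs_nonneg x, sq_abs x]
          have hg0 : 0 ≤ Real.exp (-x) - 1 + x := by
            have := Real.add_one_le_exp (-x); linarith
          have hgx2 : Real.exp (-x) - 1 + x ≤ x ^ 2 := aux_exp_bound x hxabs
          have hmin : min 1 (x ^ 2) = x ^ 2 := min_eq_right hx2.le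
          rw [← ENNReal.ofReal_mul (abs_nonneg u), hmin]
          refine ENNReal.ofReal_le_ofReal ?_
          have hA : |u| * (Real.exp (-x) - 1 + x) ≤ |u| * x ^ 2 :=
            mul_le_mul_of_nonneg_left hgx2 (abs_nonneg u)
          have hB : 0 ≤ (u + |u|) * (Real.exp (-x) - 1 + x) :=
            mul_nonneg (by linarith [neg_abs_le u]) hg0
          nlinarith
      _ ≤ ∫⁻ p : ℝ × ℝ, ENNReal.ofReal |u| * ENNReal.ofReal (min 1 (p.1 ^ 2)) ∂Pi2 :=
          setLIntegral_le_lintegral _ _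
      _ = ENNReal.ofReal |u| * ∫⁻ p : ℝ × ℝ, ENNReal.ofReal (min 1 (p.1 ^ 2)) ∂Pi2 :=
          lintegral_const_mul _ (hfm.comp measurable_fst)
      _ = _ := by rw [hmap]
  · rw [hmap]
    exact ENNReal.mul_lt_top ENNReal.ofReal_lt_top hfin.lt_top
end
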